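/- seqPhragmén satisfies participation on laminar profiles: for all laminar profiles A, committee sizes k, and voters i ∈ N_A, it is not the case that f(A_{-i},k) ≻_i f(A,k), where f is seqPhragmén. -/

import Mathlib

/-- An approval profile is a multiset of approval ballots (anonymous encoding):
each ballot is a nonempty subset of the candidates, and the electorate is nonempty. -/
def validProfile {C : Type*} [DecidableEq C] (A : Multiset (Finset C)) : Prop :=
  A ≠ 0 ∧ ∀ b ∈ A, b ≠ (∅ : Finset C)

/-- Kelly's extension, weak preference. -/
def KellyWeak {C : Type*} [DecidableEq C] (b : Finset C) (X Y : Set (Finset C)) : Prop :=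
  ∀ W ∈ X, ∀ W' ∈ Y, (W' ∩ b).card ≤ (W ∩ b).card

/-- Kelly's extension, strict preference. -/
def KellyStrict {C : Type*} [DecidableEq C] (b : Finset C) (X Y : Set (Finset C)) : Prop :=
  KellyWeak b X Y ∧ ∃ W ∈ X, ∃ W' ∈ Y, (W' ∩ b).card < (W ∩ b).card

/-- Phragmén load value `ℓ(c) = (1 + Σ_{i ∈ N_A(c)} y(i)) / |N_A(c)|`, where the load
function `y` is keyed by ballots (voters with equal ballots always carry equal loads). -/
def phragLoadVal {C : Type*} [DecidableEq C] (A : Multiset (Finset C))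
    (y : Finset C → ℚ) (c : C) : ℚ :=
  (1 + ((A.filter fun b => c ∈ b).map y).sum) /
    ((Multiset.card (A.filter fun b => c ∈ b) : ℚ))

/-- `phragValid A y E L`: starting from voter loads `y` and already elected candidates
`E`, the sequence `L` is a valid continuation of the seqPhragmén process: each elected
candidate is approved by some voter and minimizes the load value among unelected
candidates with nonempty support, and loads are updated accordingly. -/
def phragValid {C : Type*} [DecidableEq C] (A : Multiset (Finset C)) :
    (Finset C → ℚ) → Finset C → List C → Prop
  | _, _, [] => True
  | y, E, c :: rest =>
      c ∉ E ∧ (A.filter fun b => c ∈ b) ≠ 0 ∧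
      (∀ d : C, d ∉ E → (A.filter fun b => d ∈ b) ≠ 0 →
        phragLoadVal A y c ≤ phragLoadVal A y d) ∧
      phragValid A (fun b => if c ∈ b then phragLoadVal A y c else y b) (insert c E) rest

/-- The sequential Phragmén rule. -/
def seqPhragmen {C : Type*} [DecidableEq C] (A : Multiset (Finset C)) (k : ℕ) :
    Set (Finset C) :=
  {W | ∃ L : List C, L.toFinset = W ∧ L.length = k ∧ phragValid A (fun _ => 0) ∅ L}

/-- A profile is laminar if for all candidates `c, d`, the voter sets `N_A(c)` and
`N_A(d)` are comparable by inclusion or disjoint (in the anonymous encoding: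
every ballot containing `c` contains `d`, or conversely, or no ballot contains both). -/
def Laminar {C : Type*} [DecidableEq C] (A : Multiset (Finset C)) : Prop :=
  ∀ c d : C,
    (∀ b ∈ A, c ∈ b → d ∈ b) ∨ (∀ b ∈ A, d ∈ b → c ∈ b) ∨
    (∀ b ∈ A, ¬ (c ∈ b ∧ d ∈ b))

/-!
Call candidates with the same supporters a class; on a laminar profile the classes form a forest
under inclusion of supporter sets. seqPhragmén elects top-down (an unelected strict ancestor is
always cheaper), so the `j`-th member of the class of `c` is elected at load `slotLoad B c j`,
whatever happens in other classes. Hence a committee it returns is balanced: no slot it fills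
costs more than the next free slot of another class.

Let `W` be balanced for `A = b ::ₘ A'` and `W'` for `A'`, with `|W| = |W'|` and
`|W ∩ b| < |W' ∩ b|`. Some class inside `b` has more members in `W'` than in `W`; let `d` be one
missing from `W`. Deleting `b` raises the cost of a slot by the gaps
`1 / |N_{A'}(f)| - 1 / |N_A(f)|` of the classes `f ∈ b` at or above it. Balance keeps `W` out of
the strict subtree of `d`, so the slots filled by `W` gain less than the next free slot of `d`,
and balance of `W'` then forces `W'` to have at least as many members as `W` in every class of
`A'`, and more in the class of `d`: this contradicts `|W| = |W'|`.
-/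

namespace Phragmen

open Finset

variable {C : Type*} [DecidableEq C]

section Supporters

variable {B B' : Multiset (Finset C)} {c d : C}

def supporters (B : Multiset (Finset C)) (c : C) : Multiset (Finset C) := B.filter (c ∈ ·)

def supportSize (B : Multiset (Finset C)) (c : C) : ℚ := Multiset.card (supporters B c)

lemma mem_supporters {β : Finset C} : β ∈ supporters B c ↔ β ∈ B ∧ c ∈ β :=
  Multiset.mem_filter

lemma supporters_le_supporters_iff :
    supporters B c ≤ supporters B d ↔ ∀ β ∈ B, c ∈ β → d ∈ β := by
  refine ⟨fun h β hβ hc => (mem_supporters.1 (Multiset.mem_of_le h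
    (mem_supporters.2 ⟨hβ, hc⟩))).2, fun h => ?_⟩
  calc supporters B c = (supporters B d).filter (c ∈ ·) := by
        rw [supporters, supporters, Multiset.filter_filter]
        exact Multiset.filter_congr fun β hβ => ⟨fun hc => ⟨hc, h β hβ hc⟩, And.left⟩
    _ ≤ supporters B d := Multiset.filter_le _ _

lemma supporters_le_supporters_of_le (hB : B' ≤ B) (h : supporters B c ≤ supporters B d) :
    supporters B' c ≤ supporters B' d :=
  supporters_le_supporters_iff.2 fun β hβ =>
    supporters_le_supporters_iff.1 h β (Multiset.mem_of_le hB hβ)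

lemma supporters_eq_supporters_of_le (hB : B' ≤ B) (h : supporters B c = supporters B d) :
    supporters B' c = supporters B' d :=
  le_antisymm (supporters_le_supporters_of_le hB h.le) (supporters_le_supporters_of_le hB h.ge)

lemma supporters_ne_zero_of_lt (h : supporters B c < supporters B d) : supporters B d ≠ 0 :=
  fun h0 => (Multiset.zero_le _).not_gt (h0 ▸ h)

lemma supportSize_nonneg : 0 ≤ supportSize B c := Nat.cast_nonneg _

lemma supportSize_pos (h : supporters B c ≠ 0) : 0 < supportSize B c :=
  Nat.cast_pos.2 (Multiset.card_pos.2 h)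

lemma supportSize_lt_supportSize (h : supporters B c < supporters B d) :
    supportSize B c < supportSize B d :=
  Nat.cast_lt.2 (Multiset.card_lt_card h)

lemma supportSize_congr (h : supporters B c = supporters B d) :
    supportSize B c = supportSize B d := by
  rw [supportSize, h, supportSize]

lemma card_eq_sum_card_filter_supporters (B : Multiset (Finset C)) {s u : Finset C}
    (hsu : s ⊆ u) : #s = ∑ y ∈ u.image (supporters B), #(s.filter (supporters B · = y)) :=
  card_eq_sum_card_fiberwise fun _ hx => mem_image_of_mem _ (hsu hx)

lemma _root_.Laminar.mono (h : Laminar B) (hB : B' ≤ B) : Laminar B' := fun c d =>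
  (h c d).imp (fun h β hβ => h β (Multiset.mem_of_le hB hβ)) <| Or.imp
    (fun h β hβ => h β (Multiset.mem_of_le hB hβ)) (fun h β hβ => h β (Multiset.mem_of_le hB hβ))

lemma _root_.Laminar.supporters_cases (h : Laminar B) (c d : C) :
    supporters B c ≤ supporters B d ∨ supporters B d ≤ supporters B c ∨
      ∀ β ∈ B, c ∈ β → d ∉ β := by
  simp only [supporters_le_supporters_iff]
  exact (h c d).imp_right (Or.imp_right fun h β hβ hc hd => h β hβ ⟨hc, hd⟩)

end Supporters

section Slots

variable [Fintype C] {B : Multiset (Finset C)} {c d f : C} {W : Finset C}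

open Classical in
noncomputable def ancestors (B : Multiset (Finset C)) (c : C) : Finset C :=
  univ.filter fun f => supporters B c < supporters B f

def classOf (B : Multiset (Finset C)) (c : C) : Finset C :=
  univ.filter fun f => supporters B f = supporters B c

noncomputable def baseLoad (B : Multiset (Finset C)) (c : C) : ℚ :=
  ∑ f ∈ ancestors B c, 1 / supportSize B f

/-- The load at which seqPhragmén elects the `j`-th member of the class of `c`, once every
strict ancestor of `c` is elected. -/
noncomputable def slotLoad (B : Multiset (Finset C)) (c : C) (j : ℕ) : ℚ :=
  baseLoad B c + j / supportSize B c

def IsBalanced (B : Multiset (Finset C)) (W : Finset C) : Prop :=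
  ∀ c ∈ W, ∀ d ∉ W, supporters B d ≠ 0 →
    slotLoad B c #(W ∩ classOf B c) ≤ slotLoad B d (#(W ∩ classOf B d) + 1)

@[simp] lemma mem_ancestors : f ∈ ancestors B c ↔ supporters B c < supporters B f := by
  simp [ancestors]

@[simp] lemma mem_classOf : f ∈ classOf B c ↔ supporters B f = supporters B c := by
  simp [classOf]

lemma mem_classOf_self : c ∈ classOf B c := mem_classOf.2 rfl

lemma classOf_congr (h : supporters B c = supporters B d) : classOf B c = classOf B d := by
  ext f; simp [h]

lemma ancestors_congr (h : supporters B c = supporters B d) : ancestors B c = ancestors B d := by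
  ext f; simp [h]

lemma slotLoad_congr (h : supporters B c = supporters B d) : slotLoad B c = slotLoad B d := by
  ext j
  rw [slotLoad, slotLoad, baseLoad, baseLoad, ancestors_congr h, supportSize_congr h]

lemma slotLoad_le_slotLoad (hc : supporters B c ≠ 0) {i j : ℕ} (h : i ≤ j) :
    slotLoad B c i ≤ slotLoad B c j := by
  unfold slotLoad; gcongr
  exact (supportSize_pos hc).le

lemma lt_of_slotLoad_lt_slotLoad {i j : ℕ} (h : slotLoad B c i < slotLoad B c j) : i < j := by
  by_contra! hji
  refine h.not_ge (add_le_add_right ?_ _)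
  exact div_le_div_of_nonneg_right (Nat.cast_le.2 hji) supportSize_nonneg

lemma sum_inter_classOf (S : Finset C) (c : C) :
    ∑ e ∈ S ∩ classOf B c, 1 / supportSize B e = #(S ∩ classOf B c) / supportSize B c := by
  rw [sum_congr rfl fun e he => by rw [supportSize_congr (mem_classOf.1 (mem_inter.1 he).2)],
    sum_const, nsmul_eq_mul, mul_one_div]

lemma disjoint_ancestors_classOf (B : Multiset (Finset C)) (c : C) :
    Disjoint (ancestors B c) (classOf B c) :=
  disjoint_left.2 fun _ hf hf' => (mem_ancestors.1 hf).ne' (mem_classOf.1 hf')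

lemma card_insert_inter_classOf {E : Finset C} (hc : c ∉ E) (x : C) :
    #(insert c E ∩ classOf B x) =
      #(E ∩ classOf B x) + if supporters B x = supporters B c then 1 else 0 := by
  split_ifs with hx
  · rw [insert_inter_of_mem (mem_classOf.2 hx.symm), card_insert_of_notMem
      fun h => hc (mem_inter.1 h).1]
  · rw [insert_inter_of_notMem fun h => hx (mem_classOf.1 h).symm, add_zero]

lemma slotLoad_card_classOf_le_baseLoad (h : supporters B c < supporters B d) :
    slotLoad B d #(classOf B d) ≤ baseLoad B c := by
  have hsub : ancestors B d ∪ classOf B d ⊆ ancestors B c := by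
    intro f hf
    rcases mem_union.1 hf with hf | hf
    · exact mem_ancestors.2 (h.trans (mem_ancestors.1 hf))
    · exact mem_ancestors.2 ((mem_classOf.1 hf).symm ▸ h)
  calc slotLoad B d #(classOf B d)
      = ∑ f ∈ ancestors B d ∪ classOf B d, 1 / supportSize B f := by
        rw [sum_union (disjoint_ancestors_classOf B d), ← univ_inter (classOf B d),
          sum_inter_classOf, slotLoad, baseLoad]
    _ ≤ baseLoad B c :=
        sum_le_sum_of_subset_of_nonneg hsub fun f _ _ => one_div_nonneg.2 supportSize_nonneg

lemma IsBalanced.not_supporters_lt (hW : IsBalanced B W) (hc : c ∈ W)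
    (hcs : supporters B c ≠ 0) (hd : d ∉ W) (hds : supporters B d ≠ 0) :
    ¬ supporters B c < supporters B d := by
  intro hlt
  have hfree : #(W ∩ classOf B d) + 1 ≤ #(classOf B d) := by
    refine card_lt_card (ssubset_of_subset_of_ne inter_subset_right fun heq => hd ?_)
    exact mem_of_mem_inter_left (heq.symm ▸ mem_classOf_self : d ∈ W ∩ classOf B d)
  have hfilled : 0 < #(W ∩ classOf B c) := card_pos.2 ⟨c, mem_inter.2 ⟨hc, mem_classOf_self⟩⟩
  refine lt_irrefl (slotLoad B c #(W ∩ classOf B c)) ?_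
  calc slotLoad B c #(W ∩ classOf B c)
      ≤ slotLoad B d (#(W ∩ classOf B d) + 1) := hW c hc d hd hds
    _ ≤ slotLoad B d #(classOf B d) := slotLoad_le_slotLoad hds hfree
    _ ≤ baseLoad B c := slotLoad_card_classOf_le_baseLoad hlt
    _ < slotLoad B c #(W ∩ classOf B c) :=
        lt_add_of_pos_right _ (div_pos (Nat.cast_pos.2 hfilled) (supportSize_pos hcs))

lemma IsBalanced.le_card_inter_classOf (hW : IsBalanced B W) (hd : d ∈ W)
    (hc : supporters B c ≠ 0) {i : ℕ} (hi : i ≤ #(classOf B c))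
    (hlt : slotLoad B c i < slotLoad B d #(W ∩ classOf B d)) : i ≤ #(W ∩ classOf B c) := by
  by_contra! hgt
  obtain ⟨e, he, heW⟩ : ∃ e ∈ classOf B c, e ∉ W := by
    by_contra! hall
    exact hgt.not_ge (hi.trans (card_le_card fun e he => mem_inter.2 ⟨hall e he, he⟩))
  have hce := (mem_classOf.1 he).symm
  have := hW d hd e heW (hce ▸ hc)
  rw [← slotLoad_congr hce, ← classOf_congr hce] at this
  linarith [slotLoad_le_slotLoad hc hgt]

variable (B) {s t : Finset C}

lemma filter_supporters_eq_inter_classOf (c : C) :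
    s.filter (supporters B · = supporters B c) = s ∩ classOf B c := by
  ext; simp

lemma card_filter_supporters_le (h : ∀ c ∈ s, #(s ∩ classOf B c) ≤ #(t ∩ classOf B c))
    (y : Multiset (Finset C)) :
    #(s.filter (supporters B · = y)) ≤ #(t.filter (supporters B · = y)) := by
  obtain hempty | ⟨c, hc⟩ := (s.filter (supporters B · = y)).eq_empty_or_nonempty
  · simp [hempty]
  · obtain ⟨hcs, rfl⟩ := mem_filter.1 hc
    rw [filter_supporters_eq_inter_classOf, filter_supporters_eq_inter_classOf]
    exact h c hcs

lemma card_le_card_of_card_inter_classOf_le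
    (h : ∀ c ∈ s, #(s ∩ classOf B c) ≤ #(t ∩ classOf B c)) : #s ≤ #t := by
  rw [card_eq_sum_card_filter_supporters B (subset_union_left (s₂ := t)),
    card_eq_sum_card_filter_supporters B (subset_union_right (s₁ := s))]
  exact sum_le_sum fun y _ => card_filter_supporters_le B h y

lemma card_lt_card_of_card_inter_classOf (h : ∀ c ∈ s, #(s ∩ classOf B c) ≤ #(t ∩ classOf B c))
    (c₀ : C) (h₀ : #(s ∩ classOf B c₀) < #(t ∩ classOf B c₀)) : #s < #t := by
  rw [card_eq_sum_card_filter_supporters B (subset_union_left (s₂ := t)),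
    card_eq_sum_card_filter_supporters B (subset_union_right (s₁ := s))]
  refine sum_lt_sum (fun y _ => card_filter_supporters_le B h y) ⟨supporters B c₀, ?_, ?_⟩
  · obtain ⟨x, hx⟩ := card_pos.1 (h₀.trans_le' (Nat.zero_le _))
    rw [← (mem_classOf.1 (mem_inter.1 hx).2)]
    exact mem_image_of_mem _ (mem_union_right _ (mem_inter.1 hx).1)
  · rwa [filter_supporters_eq_inter_classOf, filter_supporters_eq_inter_classOf]

end Slots

section Run

variable {B : Multiset (Finset C)} {c d e f : C}

lemma nodup_of_phragValid {y : Finset C → ℚ} {E : Finset C} {L : List C}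
    (hL : phragValid B y E L) : L.Nodup ∧ ∀ x ∈ L, x ∉ E := by
  induction L generalizing y E with
  | nil => simp
  | cons c L ih =>
    obtain ⟨hc, -, -, hL⟩ := hL
    obtain ⟨hnd, hnotin⟩ := ih hL
    refine ⟨List.nodup_cons.2 ⟨fun h => hnotin c h (mem_insert_self c E), hnd⟩, ?_⟩
    exact List.forall_mem_cons.2 ⟨hc, fun x hx h => hnotin x hx (mem_insert_of_mem h)⟩

variable [Fintype C]

structure IsRunState (B : Multiset (Finset C)) (y : Finset C → ℚ) (E : Finset C) : Prop where
  load_eq : ∀ β ∈ B, y β = ∑ e ∈ E with e ∈ β, 1 / supportSize B e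
  supported : ∀ e ∈ E, supporters B e ≠ 0
  ancestors_subset : ∀ e ∈ E, ancestors B e ⊆ E
  balanced : IsBalanced B E

lemma isRunState_empty : IsRunState B (fun _ => 0) ∅ :=
  ⟨by simp, by simp, by simp, by simp [IsBalanced]⟩

lemma sum_filter_supporters_le (S : Finset C) (d : C) :
    ∑ e ∈ S with supporters B d ≤ supporters B e, 1 / supportSize B e =
      ∑ e ∈ S ∩ ancestors B d, 1 / supportSize B e + #(S ∩ classOf B d) / supportSize B d := by
  rw [← sum_inter_classOf, ← sum_union]
  · congr 1
    ext e
    simp only [mem_filter, mem_union, mem_inter, mem_ancestors, mem_classOf, le_iff_lt_or_eq,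
      eq_comm (a := supporters B e)]
    tauto
  · exact (disjoint_ancestors_classOf B d).mono inter_subset_right inter_subset_right

variable {y : Finset C → ℚ} {E : Finset C}

namespace IsRunState

lemma le_or_disjoint (hlam : Laminar B) (hS : IsRunState B y E) (he : e ∈ E) (hd : d ∉ E) :
    supporters B d ≤ supporters B e ∨ ∀ β ∈ B, d ∈ β → e ∉ β := by
  rcases hlam.supporters_cases d e with h | h | h
  · exact Or.inl h
  · rcases h.lt_or_eq with h | h
    · exact absurd (hS.ancestors_subset e he (mem_ancestors.2 h)) hd
    · exact Or.inl h.ge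
  · exact Or.inr h

lemma load_eq_sum_filter_supporters_le (hlam : Laminar B) (hS : IsRunState B y E) (hd : d ∉ E)
    {β : Finset C} (hβ : β ∈ B) (hdβ : d ∈ β) :
    y β = ∑ e ∈ E with supporters B d ≤ supporters B e, 1 / supportSize B e := by
  rw [hS.load_eq β hβ]
  refine sum_congr (filter_congr fun e he => ⟨fun heβ => ?_, fun h => ?_⟩) fun _ _ => rfl
  · exact (hS.le_or_disjoint hlam he hd).resolve_right fun h => h β hβ hdβ heβ
  · exact supporters_le_supporters_iff.1 h β hβ hdβ

lemma phragLoadVal_eq (hlam : Laminar B) (hS : IsRunState B y E) (hd : d ∉ E)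
    (hds : supporters B d ≠ 0) :
    phragLoadVal B y d =
      1 / supportSize B d + ∑ e ∈ E with supporters B d ≤ supporters B e, 1 / supportSize B e := by
  have hmap : (supporters B d).map y = Multiset.replicate (Multiset.card (supporters B d))
      (∑ e ∈ E with supporters B d ≤ supporters B e, 1 / supportSize B e) := by
    rw [Multiset.map_congr rfl fun β hβ => hS.load_eq_sum_filter_supporters_le hlam hd
      (mem_supporters.1 hβ).1 (mem_supporters.1 hβ).2, Multiset.map_const']
  have hpos := supportSize_pos hds
  change (1 + ((supporters B d).map y).sum) / supportSize B d = _
  rw [hmap, Multiset.sum_replicate, nsmul_eq_mul]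
  change (1 + supportSize B d * _) / supportSize B d = _
  field_simp

lemma ancestors_subset_of_isMin (hlam : Laminar B) (hS : IsRunState B y E) (hc : c ∉ E)
    (hcs : supporters B c ≠ 0)
    (hmin : ∀ d ∉ E, supporters B d ≠ 0 → phragLoadVal B y c ≤ phragLoadVal B y d) :
    ancestors B c ⊆ E := by
  -- an unelected ancestor `f` carries the same accumulated load as `c` on more supporters
  intro f hf
  by_contra hfE
  have hcf := mem_ancestors.1 hf
  have hfs := supporters_ne_zero_of_lt hcf
  obtain ⟨β, hβ⟩ := Multiset.exists_mem_of_ne_zero hcs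
  obtain ⟨hβB, hcβ⟩ := mem_supporters.1 hβ
  have hacc : ∑ e ∈ E with supporters B c ≤ supporters B e, 1 / supportSize B e =
      ∑ e ∈ E with supporters B f ≤ supporters B e, 1 / supportSize B e := by
    refine sum_congr (filter_congr fun e he => ⟨fun hce => ?_, hcf.le.trans⟩) fun _ _ => rfl
    refine (hS.le_or_disjoint hlam he hfE).resolve_right fun h => h β hβB ?_ ?_
    · exact supporters_le_supporters_iff.1 hcf.le β hβB hcβ
    · exact supporters_le_supporters_iff.1 hce β hβB hcβ
  have := hmin f hfE hfs
  rw [hS.phragLoadVal_eq hlam hc hcs, hS.phragLoadVal_eq hlam hfE hfs, hacc] at this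
  have := one_div_lt_one_div_of_lt (supportSize_pos hcs) (supportSize_lt_supportSize hcf)
  linarith

lemma phragLoadVal_le_slotLoad (hlam : Laminar B) (hS : IsRunState B y E) (hd : d ∉ E)
    (hds : supporters B d ≠ 0) : phragLoadVal B y d ≤ slotLoad B d (#(E ∩ classOf B d) + 1) := by
  rw [hS.phragLoadVal_eq hlam hd hds, sum_filter_supporters_le, slotLoad, baseLoad]
  push_cast
  have := sum_le_sum_of_subset_of_nonneg (f := fun e => 1 / supportSize B e)
    (inter_subset_right (s₁ := E) (s₂ := ancestors B d))
    fun e _ _ => one_div_nonneg.2 supportSize_nonneg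
  rw [add_div]
  linarith

lemma phragLoadVal_eq_slotLoad (hlam : Laminar B) (hS : IsRunState B y E) (hc : c ∉ E)
    (hcs : supporters B c ≠ 0) (hanc : ancestors B c ⊆ E) :
    phragLoadVal B y c = slotLoad B c (#(E ∩ classOf B c) + 1) := by
  rw [hS.phragLoadVal_eq hlam hc hcs, sum_filter_supporters_le, inter_eq_right.2 hanc,
    slotLoad, baseLoad]
  push_cast
  ring

lemma elect (hlam : Laminar B) (hS : IsRunState B y E) (hc : c ∉ E)
    (hcs : supporters B c ≠ 0)
    (hmin : ∀ d ∉ E, supporters B d ≠ 0 → phragLoadVal B y c ≤ phragLoadVal B y d) :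
    IsRunState B (fun β => if c ∈ β then phragLoadVal B y c else y β) (insert c E) := by
  have hanc := hS.ancestors_subset_of_isMin hlam hc hcs hmin
  refine ⟨fun β hβ => ?_, (forall_mem_insert _ _ _).2 ⟨hcs, hS.supported⟩,
    (forall_mem_insert _ _ _).2 ⟨hanc.trans (subset_insert c E),
      fun e he => (hS.ancestors_subset e he).trans (subset_insert c E)⟩,
    fun x hx d hd hds => ?_⟩
  · by_cases hcβ : c ∈ β
    · rw [if_pos hcβ, filter_insert, if_pos hcβ, sum_insert fun h => hc (mem_filter.1 h).1,
        ← hS.load_eq β hβ, hS.phragLoadVal_eq hlam hc hcs,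
        hS.load_eq_sum_filter_supporters_le hlam hc hβ hcβ]
    · rw [if_neg hcβ, filter_insert, if_neg hcβ, hS.load_eq β hβ]
  have hdE : d ∉ E := fun h => hd (mem_insert_of_mem h)
  have hfilled : slotLoad B x #(insert c E ∩ classOf B x) ≤
      slotLoad B d (#(E ∩ classOf B d) + 1) := by
    by_cases hxc : supporters B x = supporters B c
    · rw [card_insert_inter_classOf hc, if_pos hxc, slotLoad_congr hxc, classOf_congr hxc,
        ← hS.phragLoadVal_eq_slotLoad hlam hc hcs hanc]
      exact (hmin d hdE hds).trans (hS.phragLoadVal_le_slotLoad hlam hdE hds)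
    · rw [card_insert_inter_classOf hc, if_neg hxc, add_zero]
      have hxE : x ∈ E := (mem_insert.1 hx).resolve_left fun h => hxc (h ▸ rfl)
      exact hS.balanced x hxE d hdE hds
  refine hfilled.trans (slotLoad_le_slotLoad hds ?_)
  rw [card_insert_inter_classOf hc]
  omega

end IsRunState

lemma IsRunState.of_phragValid (hlam : Laminar B) {L : List C} (hL : phragValid B y E L)
    (hS : IsRunState B y E) : ∃ y', IsRunState B y' (E ∪ L.toFinset) := by
  induction L generalizing y E with
  | nil => exact ⟨y, by simpa using hS⟩
  | cons c L ih =>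
    obtain ⟨hc, hcs, hmin, hL⟩ := hL
    obtain ⟨y', hS'⟩ := ih hL (hS.elect hlam hc hcs hmin)
    exact ⟨y', by simpa [insert_union, union_insert] using hS'⟩

lemma isBalanced_of_mem_seqPhragmen (hlam : Laminar B) {k : ℕ} {W : Finset C}
    (hW : W ∈ seqPhragmen B k) :
    #W = k ∧ (∀ c ∈ W, supporters B c ≠ 0) ∧ IsBalanced B W := by
  obtain ⟨L, rfl, rfl, hL⟩ := hW
  obtain ⟨y, hS⟩ := isRunState_empty.of_phragValid hlam hL
  rw [empty_union] at hS
  exact ⟨List.toFinset_card_of_nodup (nodup_of_phragValid hL).1, hS.supported, hS.balanced⟩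

end Run

section Erase

variable {A' : Multiset (Finset C)} {b : Finset C} {c d e f : C} {W W' : Finset C}

lemma supporters_cons_of_mem (hc : c ∈ b) : supporters (b ::ₘ A') c = b ::ₘ supporters A' c :=
  Multiset.filter_cons_of_pos _ hc

lemma supporters_cons_of_notMem (hc : c ∉ b) : supporters (b ::ₘ A') c = supporters A' c :=
  Multiset.filter_cons_of_neg _ hc

lemma supporters_cons_ne_zero (hc : c ∈ b) : supporters (b ::ₘ A') c ≠ 0 := by
  rw [supporters_cons_of_mem hc]; exact Multiset.cons_ne_zero

lemma mem_of_supporters_cons_le (hc : c ∈ b)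
    (h : supporters (b ::ₘ A') c ≤ supporters (b ::ₘ A') e) : e ∈ b :=
  (mem_supporters.1 (Multiset.mem_of_le h
    (mem_supporters.2 ⟨Multiset.mem_cons_self _ _, hc⟩))).2

lemma supporters_cons_lt_iff (hc : c ∈ b) (he : e ∈ b) :
    supporters (b ::ₘ A') c < supporters (b ::ₘ A') e ↔ supporters A' c < supporters A' e := by
  rw [supporters_cons_of_mem hc, supporters_cons_of_mem he, Multiset.cons_lt_cons_iff]

lemma supporters_le_of_supporters_cons_le (h : supporters (b ::ₘ A') c ≤ supporters (b ::ₘ A') e) :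
    supporters A' c ≤ supporters A' e :=
  supporters_le_supporters_of_le (Multiset.le_cons_self _ _) h

lemma supporters_eq_of_supporters_cons_eq (h : supporters (b ::ₘ A') c = supporters (b ::ₘ A') e) :
    supporters A' c = supporters A' e :=
  supporters_eq_supporters_of_le (Multiset.le_cons_self _ _) h

lemma supportSize_cons_of_mem (hc : c ∈ b) :
    supportSize (b ::ₘ A') c = supportSize A' c + 1 := by
  rw [supportSize, supportSize, supporters_cons_of_mem hc, Multiset.card_cons]; push_cast; rfl

lemma supportSize_cons_of_notMem (hc : c ∉ b) : supportSize (b ::ₘ A') c = supportSize A' c := by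
  rw [supportSize, supportSize, supporters_cons_of_notMem hc]

lemma _root_.Laminar.supporters_le_or_le_of_mem (hlam : Laminar (b ::ₘ A')) (hc : c ∈ b)
    (hd : d ∈ b) :
    supporters (b ::ₘ A') c ≤ supporters (b ::ₘ A') d ∨
      supporters (b ::ₘ A') d ≤ supporters (b ::ₘ A') c :=
  (hlam.supporters_cases c d).imp_right
    (Or.resolve_right · fun h => h b (Multiset.mem_cons_self _ _) hc hd)

lemma supporters_ne_zero_of_not_lt (hlam : Laminar (b ::ₘ A')) (hd : d ∈ b)
    (hd' : supporters A' d ≠ 0) (hc : supporters (b ::ₘ A') c ≠ 0)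
    (hcd : ¬ supporters (b ::ₘ A') c < supporters (b ::ₘ A') d) : supporters A' c ≠ 0 := by
  by_cases hcb : c ∈ b
  · have hdc : supporters (b ::ₘ A') d ≤ supporters (b ::ₘ A') c :=
      (hlam.supporters_le_or_le_of_mem hd hcb).elim id fun h => (h.lt_or_eq.resolve_left hcd).ge
    exact fun h0 => hd' (Multiset.le_zero.1 (h0 ▸ supporters_le_of_supporters_cons_le hdc))
  · rwa [← supporters_cons_of_notMem hcb]

def supportGap (A' : Multiset (Finset C)) (b : Finset C) (f : C) : ℚ :=
  1 / supportSize A' f - 1 / supportSize (b ::ₘ A') f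

lemma supportGap_of_notMem (hf : f ∉ b) : supportGap A' b f = 0 := by
  rw [supportGap, supportSize_cons_of_notMem hf, sub_self]

lemma supportGap_nonneg (hf : supporters A' f ≠ 0) : 0 ≤ supportGap A' b f :=
  sub_nonneg.2 <| one_div_le_one_div_of_le (supportSize_pos hf) <| Nat.cast_le.2 <|
    Multiset.card_le_card (Multiset.filter_le_filter _ (Multiset.le_cons_self _ _))

lemma supportGap_pos (hfb : f ∈ b) (hf : supporters A' f ≠ 0) : 0 < supportGap A' b f := by
  rw [supportGap, supportSize_cons_of_mem hfb, sub_pos]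
  exact one_div_lt_one_div_of_lt (supportSize_pos hf) (lt_add_one _)

lemma supportGap_congr (h : supporters (b ::ₘ A') c = supporters (b ::ₘ A') e) :
    supportGap A' b c = supportGap A' b e := by
  rw [supportGap, supportGap, supportSize_congr h,
    supportSize_congr (supporters_eq_of_supporters_cons_eq h)]

variable [Fintype C]

lemma classOf_cons (c : C) :
    classOf (b ::ₘ A') c = (classOf A' c).filter fun e => (e ∈ b ↔ c ∈ b) := by
  ext e
  simp only [mem_classOf, mem_filter]
  by_cases he : e ∈ b <;> by_cases hc : c ∈ b <;>
    simp [he, hc, supporters_cons_of_mem, supporters_cons_of_notMem, Multiset.cons_inj_right]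
  · exact fun h => hc (mem_supporters.1 (h ▸ Multiset.mem_cons_self b _)).2
  · exact fun h => he (mem_supporters.1 (h ▸ Multiset.mem_cons_self b _)).2

lemma ancestors_cons_of_mem (hlam : Laminar (b ::ₘ A')) (hc : c ∈ b)
    (hc' : supporters A' c ≠ 0) : ancestors A' c = ancestors (b ::ₘ A') c := by
  ext f
  rw [mem_ancestors, mem_ancestors]
  by_cases hf : f ∈ b
  · exact (supporters_cons_lt_iff hc hf).symm
  refine ⟨fun hlt => ?_, fun hlt => absurd (mem_of_supporters_cons_le hc hlt.le) hf⟩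
  obtain ⟨β, hβ⟩ := Multiset.exists_mem_of_ne_zero hc'
  obtain ⟨hβA, hcβ⟩ := mem_supporters.1 hβ
  rcases hlam.supporters_cases c f with h | h | h
  · exact absurd (mem_of_supporters_cons_le hc h) hf
  · exact absurd hlt (supporters_le_of_supporters_cons_le h).not_gt
  · exact absurd (supporters_le_supporters_iff.1 hlt.le β hβA hcβ)
      (h β (Multiset.mem_cons_of_mem hβA) hcβ)

lemma ancestors_cons_of_notMem (hc : c ∉ b) :
    ancestors A' c = ancestors (b ::ₘ A') c \ (classOf A' c).filter (· ∈ b) := by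
  ext f
  by_cases hf : f ∈ b
  · simp only [mem_sdiff, mem_ancestors, mem_filter, mem_classOf, hf, and_true,
      supporters_cons_of_notMem hc, supporters_cons_of_mem hf]
    refine ⟨fun h => ⟨h.trans_le (Multiset.le_cons_self _ _), h.ne'⟩, fun ⟨h, hne⟩ => ?_⟩
    refine lt_of_le_of_ne ((Multiset.le_cons_of_notMem fun hb => hc ?_).1 h.le) (Ne.symm hne)
    exact (mem_supporters.1 hb).2
  · simp [hf, supporters_cons_of_notMem hc, supporters_cons_of_notMem hf]

lemma filter_mem_classOf_subset_ancestors (hc : c ∉ b) :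
    (classOf A' c).filter (· ∈ b) ⊆ ancestors (b ::ₘ A') c := by
  intro f hf
  obtain ⟨hfc, hfb⟩ := mem_filter.1 hf
  rw [mem_ancestors, supporters_cons_of_notMem hc, supporters_cons_of_mem hfb, mem_classOf.1 hfc]
  exact Multiset.lt_cons_self _ _

/-- In `A'` the class of `c ∉ b` also contains the candidates of `b` with the same supporters in
`A'`; these take its first slots, and the members of the old class of `c` move up past them. -/
def slotShift (A' : Multiset (Finset C)) (b : Finset C) (c : C) : ℕ :=
  if c ∈ b then 0 else #((classOf A' c).filter (· ∈ b))

lemma slotLoad_slotShift_add (hlam : Laminar (b ::ₘ A')) (hc : supporters A' c ≠ 0) (j : ℕ) :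
    slotLoad A' c (slotShift A' b c + j) = slotLoad (b ::ₘ A') c j +
      ∑ f ∈ ancestors (b ::ₘ A') c, supportGap A' b f + j * supportGap A' b c := by
  have hgap : ∑ f ∈ ancestors (b ::ₘ A') c, 1 / supportSize A' f =
      baseLoad (b ::ₘ A') c + ∑ f ∈ ancestors (b ::ₘ A') c, supportGap A' b f := by
    rw [baseLoad, ← sum_add_distrib]
    exact sum_congr rfl fun f _ => by rw [supportGap]; ring
  by_cases hcb : c ∈ b
  · rw [slotShift, if_pos hcb, zero_add, slotLoad, slotLoad, baseLoad,
      ancestors_cons_of_mem hlam hcb hc, hgap, supportGap]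
    ring
  · have hM : ∑ f ∈ (classOf A' c).filter (· ∈ b), 1 / supportSize A' f =
        #((classOf A' c).filter (· ∈ b)) / supportSize A' c := by
      rw [sum_congr rfl fun f hf => by rw [supportSize_congr (mem_classOf.1 (mem_filter.1 hf).1)],
        sum_const, nsmul_eq_mul, mul_one_div]
    have hbase := sum_sdiff (f := fun f => 1 / supportSize A' f)
      (filter_mem_classOf_subset_ancestors (A' := A') hcb)
    rw [← ancestors_cons_of_notMem hcb, hM] at hbase
    rw [slotShift, if_neg hcb, slotLoad, slotLoad, supportGap_of_notMem hcb,
      supportSize_cons_of_notMem hcb, baseLoad]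
    push_cast
    rw [add_div]
    linarith

lemma slotShift_add_card_classOf_le (c : C) :
    slotShift A' b c + #(classOf (b ::ₘ A') c) ≤ #(classOf A' c) := by
  rw [classOf_cons, slotShift]
  split_ifs with hc
  · simpa [hc] using card_filter_le _ _
  · simp only [hc, iff_false]
    rw [card_filter_add_card_filter_not]

lemma exists_card_inter_classOf_le_slotShift_add {c₀ : C} (hc₀ : c₀ ∈ W) :
    ∃ c ∈ W ∩ classOf A' c₀,
      #(W ∩ classOf A' c₀) ≤ slotShift A' b c + #(W ∩ classOf (b ::ₘ A') c) := by
  by_cases h : ∃ c ∈ W ∩ classOf A' c₀, c ∉ b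
  · obtain ⟨c, hc, hcb⟩ := h
    refine ⟨c, hc, ?_⟩
    rw [← classOf_congr (mem_classOf.1 (mem_inter.1 hc).2), slotShift, if_neg hcb, classOf_cons,
      ← card_filter_add_card_filter_not (· ∈ b)]
    refine add_le_add (card_le_card fun e he => ?_) (card_le_card fun e he => ?_) <;>
      simp only [mem_filter, mem_inter, hcb, iff_false] at he ⊢ <;> tauto
  · push Not at h
    have hc₀b : c₀ ∈ b := h c₀ (mem_inter.2 ⟨hc₀, mem_classOf_self⟩)
    refine ⟨c₀, mem_inter.2 ⟨hc₀, mem_classOf_self⟩, ?_⟩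
    rw [slotShift, if_pos hc₀b, zero_add, classOf_cons]
    refine card_le_card fun e he => ?_
    simp only [mem_filter, mem_inter, hc₀b, iff_true] at he ⊢
    exact ⟨he.1, he.2, h e (mem_inter.2 he)⟩

lemma slotLoad_slotShift_lt (hlam : Laminar (b ::ₘ A')) (hW : IsBalanced (b ::ₘ A') W)
    (hd : d ∈ b) (hdW : d ∉ W) (hd' : supporters A' d ≠ 0) (hc : c ∈ W)
    (hc' : supporters A' c ≠ 0) (hcd : ¬ supporters (b ::ₘ A') c < supporters (b ::ₘ A') d) :
    slotLoad A' c (slotShift A' b c + #(W ∩ classOf (b ::ₘ A') c)) <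
      slotLoad A' d (#(W ∩ classOf (b ::ₘ A') d) + 1) := by
  set A := b ::ₘ A'
  set gap := supportGap A' b
  have hbal := hW c hc d hdW (supporters_cons_ne_zero hd)
  have hrhs := slotLoad_slotShift_add hlam hd' (#(W ∩ classOf A d) + 1)
  rw [slotShift, if_pos hd, zero_add] at hrhs
  rw [slotLoad_slotShift_add hlam hc', hrhs]
  have hgap_d := supportGap_pos hd hd'
  suffices ∑ f ∈ ancestors A c, gap f + #(W ∩ classOf A c) * gap c ≤
      ∑ f ∈ ancestors A d, gap f + #(W ∩ classOf A d) * gap d by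
    push_cast
    linarith
  by_cases hcd' : supporters A c = supporters A d
  · rw [ancestors_congr hcd', classOf_congr hcd', show gap c = gap d from supportGap_congr hcd']
  have hsub : (ancestors A c ∪ classOf A c).filter (· ∈ b) ⊆ ancestors A d := by
    intro f hf
    simp only [mem_filter, mem_union, mem_ancestors, mem_classOf] at hf
    obtain ⟨hcf, hfb⟩ := hf
    have hcf : supporters A c ≤ supporters A f := hcf.elim le_of_lt ge_of_eq
    have hfd : ¬ supporters A f ≤ supporters A d := fun h =>
      hcd ((hcf.trans h).lt_of_ne hcd')
    refine mem_ancestors.2 (lt_of_le_of_ne ?_ fun h => hfd h.ge)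
    exact (hlam.supporters_le_or_le_of_mem hd hfb).resolve_right hfd
  calc ∑ f ∈ ancestors A c, gap f + #(W ∩ classOf A c) * gap c
      ≤ ∑ f ∈ ancestors A c ∪ classOf A c, gap f := by
        rw [sum_union (disjoint_ancestors_classOf A c),
          sum_congr rfl fun f hf => supportGap_congr (mem_classOf.1 hf), sum_const, nsmul_eq_mul]
        gcongr
        · exact supportGap_nonneg hc'
        · exact inter_subset_right
    _ = ∑ f ∈ (ancestors A c ∪ classOf A c).filter (· ∈ b), gap f :=
        (sum_filter_of_ne fun f _ h => by_contra fun hf => h (supportGap_of_notMem hf)).symm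
    _ ≤ ∑ f ∈ ancestors A d, gap f := sum_le_sum_of_subset_of_nonneg hsub fun f hf _ =>
        supportGap_nonneg fun h0 => hd' (Multiset.le_zero.1
          (h0 ▸ supporters_le_of_supporters_cons_le (mem_ancestors.1 hf).le))
    _ ≤ _ := le_add_of_nonneg_right (mul_nonneg (Nat.cast_nonneg _) hgap_d.le)

lemma exists_notMem_card_inter_classOf_lt (hW's : ∀ c ∈ W', supporters A' c ≠ 0)
    (hlt : #(W ∩ b) < #(W' ∩ b)) :
    ∃ d ∈ b, d ∉ W ∧ supporters A' d ≠ 0 ∧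
      #(W ∩ classOf (b ::ₘ A') d) < #(W' ∩ classOf A' d) := by
  have hclass_sub : ∀ {c}, c ∈ b → classOf (b ::ₘ A') c ⊆ b := fun hc e he =>
    mem_of_supporters_cons_le hc (mem_classOf.1 he).ge
  obtain ⟨c, hc, hmore⟩ :
      ∃ c ∈ W' ∩ b, #(W ∩ classOf (b ::ₘ A') c) < #(W' ∩ classOf (b ::ₘ A') c) := by
    by_contra! h
    refine hlt.not_ge (card_le_card_of_card_inter_classOf_le (b ::ₘ A') fun c hc => ?_)
    rw [inter_assoc, inter_assoc, inter_eq_right.2 (hclass_sub (mem_inter.1 hc).2)]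
    exact h c hc
  obtain ⟨d, hd, hdW⟩ : ∃ d ∈ classOf (b ::ₘ A') c, d ∉ W := by
    by_contra! h
    exact hmore.not_ge (card_le_card fun e he => mem_inter.2 ⟨h e (mem_inter.1 he).2,
      (mem_inter.1 he).2⟩)
  have hdc := mem_classOf.1 hd
  refine ⟨d, hclass_sub (mem_inter.1 hc).2 hd, hdW,
    supporters_eq_of_supporters_cons_eq hdc ▸ hW's c (mem_inter.1 hc).1, ?_⟩
  rw [classOf_congr hdc]
  refine hmore.trans_le (card_le_card (inter_subset_inter_left ?_))
  rw [classOf_cons, classOf_congr (supporters_eq_of_supporters_cons_eq hdc.symm)]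
  exact filter_subset _ _

lemma card_lt_card_of_slotLoad_slotShift_lt (hW' : IsBalanced A' W')
    (hWs : ∀ c ∈ W, supporters A' c ≠ 0) (hd : supporters A' d ≠ 0) {r : ℕ}
    (hr : r < #(W' ∩ classOf A' d))
    (hslot : ∀ c ∈ W, slotLoad A' c (slotShift A' b c + #(W ∩ classOf (b ::ₘ A') c)) <
      slotLoad A' d (r + 1)) :
    #W < #W' := by
  obtain ⟨x, hx⟩ : (W' ∩ classOf A' d).Nonempty := card_pos.1 (by omega)
  have hxd := mem_classOf.1 (mem_inter.1 hx).2
  have hfree : slotLoad A' d (r + 1) ≤ slotLoad A' x #(W' ∩ classOf A' x) := by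
    rw [slotLoad_congr hxd, classOf_congr hxd]
    exact slotLoad_le_slotLoad hd hr
  refine card_lt_card_of_card_inter_classOf A' (fun c₀ hc₀ => ?_) d ?_
  · obtain ⟨c, hc, hle⟩ := exists_card_inter_classOf_le_slotShift_add (b := b) hc₀
    rw [← classOf_congr (mem_classOf.1 (mem_inter.1 hc).2)] at hle ⊢
    refine hle.trans (hW'.le_card_inter_classOf (mem_inter.1 hx).1 (hWs c (mem_inter.1 hc).1)
      ?_ ((hslot c (mem_inter.1 hc).1).trans_le hfree))
    exact (Nat.add_le_add_left (card_le_card inter_subset_right) _).trans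
      (slotShift_add_card_classOf_le c)
  · obtain hempty | ⟨c₀, hc₀⟩ := (W ∩ classOf A' d).eq_empty_or_nonempty
    · rw [hempty, card_empty]
      omega
    obtain ⟨c, hc, hle⟩ := exists_card_inter_classOf_le_slotShift_add (b := b) (mem_inter.1 hc₀).1
    rw [classOf_congr (mem_classOf.1 (mem_inter.1 hc₀).2)] at hc hle
    have := (hslot c (mem_inter.1 hc).1).trans_le (slotLoad_le_slotLoad hd hr)
    rw [← slotLoad_congr (mem_classOf.1 (mem_inter.1 hc).2)] at this
    exact hle.trans_lt (lt_of_slotLoad_lt_slotLoad this)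

theorem card_inter_le_of_isBalanced (hlam : Laminar (b ::ₘ A'))
    (hW : IsBalanced (b ::ₘ A') W) (hWs : ∀ c ∈ W, supporters (b ::ₘ A') c ≠ 0)
    (hW' : IsBalanced A' W') (hW's : ∀ c ∈ W', supporters A' c ≠ 0) (hcard : #W = #W') :
    #(W' ∩ b) ≤ #(W ∩ b) := by
  by_contra! hlt
  obtain ⟨d, hdb, hdW, hd, hr⟩ := exists_notMem_card_inter_classOf_lt hW's hlt
  have hbelow : ∀ c ∈ W, ¬ supporters (b ::ₘ A') c < supporters (b ::ₘ A') d := fun c hc =>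
    hW.not_supporters_lt hc (hWs c hc) hdW (supporters_cons_ne_zero hdb)
  have hWs' : ∀ c ∈ W, supporters A' c ≠ 0 := fun c hc =>
    supporters_ne_zero_of_not_lt hlam hdb hd (hWs c hc) (hbelow c hc)
  refine hcard.not_lt (card_lt_card_of_slotLoad_slotShift_lt (b := b) hW' hWs' hd hr fun c hc => ?_)
  exact slotLoad_slotShift_lt hlam hW hdb hdW hd hc (hWs' c hc) (hbelow c hc)

end Erase

end Phragmen

theorem seqPhragmen_participation_laminar_general
    {C : Type*} [DecidableEq C] [Fintype C]
    (A : Multiset (Finset C)) (hlam : Laminar A)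
    (k : ℕ)
    (b : Finset C) (hb : b ∈ A) :
    ¬ KellyStrict b (seqPhragmen (A.erase b) k) (seqPhragmen A k) := by
  rintro ⟨-, W', hW', W, hW, hlt⟩
  rw [← Multiset.cons_erase hb] at hlam hW
  obtain ⟨hWk, hWs, hWb⟩ := Phragmen.isBalanced_of_mem_seqPhragmen hlam hW
  obtain ⟨hW'k, hW's, hW'b⟩ :=
    Phragmen.isBalanced_of_mem_seqPhragmen (hlam.mono (Multiset.le_cons_self _ _)) hW'
  exact hlt.not_ge <|
    Phragmen.card_inter_le_of_isBalanced hlam hWb hWs hW'b hW's (hWk.trans hW'k.symm)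

/-- seqPhragmén satisfies participation on laminar profiles: no voter can strictly
benefit from abstaining (w.r.t. Kelly's extension). -/
theorem seqPhragmen_participation_laminar
    {C : Type*} [DecidableEq C] [Fintype C] (hm : 1 < Fintype.card C)
    (A : Multiset (Finset C)) (hA : validProfile A) (hlam : Laminar A)
    (k : ℕ) (hk1 : 1 ≤ k) (hk2 : k < Fintype.card C)
    (b : Finset C) (hb : b ∈ A) :
    ¬ KellyStrict b (seqPhragmen (A.erase b) k) (seqPhragmen A k) :=
  seqPhragmen_participation_laminar_general A hlam k b hb
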